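/- arXiv:1905.05496 — 2 statements merged into one kernel-verified Lean document; each statement's English description precedes it below -/
import Mathlib

section
/- Let E be a lattice effect algebra, C(E) the commutative quasiresiduated lattice with x⊙y := (x'+y')' (defined iff x' ≤ y) and x→y := (x∧y)+x', and E(C(E)) the effect algebra with x⊕y := (x*⊙y*)* where x* := x→0, defined iff x ≤ y* in C(E). Then E(C(E)) = E: the unary operations coincide (x* = x'), ⊕ is defined exactly when + is, and they agree. -/
/-- An effect algebra: partial commutative associative `add` with definedness
predicate `D`, orthosupplement `compl`, bottom `zero` and top `one`. -/
structure EffectAlgebra (E : Type*) where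
  D : E → E → Prop
  add : E → E → E
  compl : E → E
  zero : E
  one : E
  comm_def : ∀ x y, D x y → D y x
  comm : ∀ x y, D x y → add x y = add y x
  assoc_iff : ∀ x y z, (D x y ∧ D (add x y) z) ↔ (D y z ∧ D x (add y z))
  assoc : ∀ x y z, D x y → D (add x y) z → add (add x y) z = add x (add y z)
  compl_def : ∀ x, D x (compl x)
  compl_add : ∀ x, add x (compl x) = one
  compl_unique : ∀ x u, D x u → add x u = one → u = compl x
  one_add : ∀ x, D one x → x = zero

/-- The induced order of an effect algebra: `x ≤ y` iff `x + z = y` for some `z`. -/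
def EffectAlgebra.le {E : Type*} (A : EffectAlgebra E) (x y : E) : Prop :=
  ∃ z, A.D x z ∧ A.add x z = y
/-- A lattice effect algebra: an effect algebra whose induced order coincides
with a given bounded lattice order. -/
structure LatticeEffectAlgebra (E : Type*) [Lattice E] [BoundedOrder E]
    extends EffectAlgebra E where
  le_iff : ∀ x y, (∃ z, D x z ∧ add x z = y) ↔ x ≤ y
  zero_eq : zero = ⊥
  one_eq : one = ⊤

/-- `x* := x → 0 = (x ∧ 0) + x'` in the quasiresiduated lattice `C(E)`. -/
def starOf {E : Type*} [Lattice E] [BoundedOrder E]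
    (A : LatticeEffectAlgebra E) (x : E) : E :=
  A.add (x ⊓ ⊥) (A.compl x)

/-- `a ⊙ b := (a' + b')'` in the quasiresiduated lattice `C(E)`. -/
def odotOf {E : Type*} [Lattice E] [BoundedOrder E]
    (A : LatticeEffectAlgebra E) (a b : E) : E :=
  A.compl (A.add (A.compl a) (A.compl b))

section Aux
variable {E : Type*} [Lattice E] [BoundedOrder E] (A : LatticeEffectAlgebra E)

lemma LEA_compl_compl : ∀ x, A.compl (A.compl x) = x := fun x =>
  (A.compl_unique (A.compl x) x (A.comm_def x _ (A.compl_def x))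
    ((A.comm x _ (A.compl_def x)) ▸ A.compl_add x)).symm

lemma LEA_compl_one : A.compl A.one = A.zero :=
  A.one_add _ (A.compl_def A.one)

lemma LEA_D_one_zero : A.D A.one A.zero := by
  have := A.compl_def A.one
  rwa [LEA_compl_one] at this

lemma LEA_add_one_zero : A.add A.one A.zero = A.one := by
  have := A.compl_add A.one
  rwa [LEA_compl_one] at this

lemma LEA_add_compl_zero (x : E) :
    A.D (A.compl x) A.zero ∧ A.add (A.compl x) A.zero = A.compl x := by
  have h1 := A.compl_def x
  have h2 := A.compl_add x
  have hD : A.D (A.add x (A.compl x)) A.zero := by rw [h2]; exact LEA_D_one_zero A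
  obtain ⟨hd1, hd2⟩ := (A.assoc_iff x (A.compl x) A.zero).1 ⟨h1, hD⟩
  have he : A.add x (A.add (A.compl x) A.zero) = A.one := by
    rw [← A.assoc x (A.compl x) A.zero h1 hD, h2, LEA_add_one_zero A]
  exact ⟨hd1, A.compl_unique x _ hd2 he⟩

lemma LEA_D_zero (x : E) : A.D x A.zero := by
  have := (LEA_add_compl_zero A (A.compl x)).1
  rwa [LEA_compl_compl A] at this

lemma LEA_add_zero (x : E) : A.add x A.zero = x := by
  have := (LEA_add_compl_zero A (A.compl x)).2
  rwa [LEA_compl_compl A] at this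

lemma LEA_star (x : E) : starOf A x = A.compl x := by
  have hz : x ⊓ (⊥ : E) = ⊥ := inf_bot_eq x
  rw [starOf, hz, ← A.zero_eq,
    A.comm A.zero (A.compl x) (A.comm_def _ _ (LEA_D_zero A (A.compl x))),
    LEA_add_zero A]

lemma LEA_le_compl_iff (x y : E) : x ≤ A.compl y ↔ A.D x y := by
  constructor
  · intro h
    obtain ⟨z, hz, he⟩ := (A.le_iff x (A.compl y)).2 h
    have hDy : A.D (A.add x z) y := by
      rw [he]; exact A.comm_def _ _ (A.compl_def y)
    obtain ⟨hzy, hx⟩ := (A.assoc_iff x z y).1 ⟨hz, hDy⟩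
    have hx' : A.D x (A.add y z) := by
      rwa [A.comm z y hzy] at hx
    exact ((A.assoc_iff x y z).2 ⟨A.comm_def _ _ hzy, hx'⟩).1
  · intro h
    set t := A.compl (A.add x y) with ht
    have hDt : A.D (A.add y x) t := by
      rw [← A.comm x y h]; exact A.compl_def _
    obtain ⟨hxt, hyxt⟩ := (A.assoc_iff y x t).1 ⟨A.comm_def _ _ h, hDt⟩
    have he : A.add y (A.add x t) = A.one := by
      rw [← A.assoc y x t (A.comm_def _ _ h) hDt, A.comm y x (A.comm_def _ _ h)]
      exact A.compl_add _
    have : A.add x t = A.compl y := A.compl_unique y _ hyxt he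
    exact (A.le_iff x (A.compl y)).1 ⟨t, hxt, this⟩

end Aux

/-- `E(C(E)) = E`: for a lattice effect algebra `E`, the effect algebra
reconstructed from its quasiresiduated lattice `C(E)` (with
`x ⊕ y := (x* ⊙ y*)*`, defined iff `x ≤ y*`) coincides with `E`. -/

theorem reconstruction_of_LEA {E : Type*} [Lattice E] [BoundedOrder E]
    (A : LatticeEffectAlgebra E) :
    (∀ x, starOf A x = A.compl x) ∧
    (∀ x y, x ≤ starOf A y ↔ A.D x y) ∧
    (∀ x y, A.D x y →
      starOf A (odotOf A (starOf A x) (starOf A y)) = A.add x y) := by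
  refine ⟨LEA_star A, fun x y => by rw [LEA_star A]; exact LEA_le_compl_iff A x y, ?_⟩
  intro x y h
  rw [LEA_star A, LEA_star A, LEA_star A, odotOf, LEA_compl_compl A,
    LEA_compl_compl A, LEA_compl_compl A]
end

section
/- Let Q be a quasiresiduated lattice. Define x + y := tilde(bar x ⊙ bar y) whenever x ≤ bar y. Then (Q,+,bar,tilde,0,1) is a good lattice pseudoeffect algebra whose induced order coincides with the lattice order of Q. -/
/-- A pseudoeffect algebra: partial associative `add` with definedness
predicate `D`, left complement `lcompl` (bar) and right complement `rcompl`
(tilde). -/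
structure PseudoEffectAlgebra (P : Type*) where
  D : P → P → Prop
  add : P → P → P
  lcompl : P → P
  rcompl : P → P
  zero : P
  one : P
  P1 : ∀ x y, D x y → ∃ u w, D u x ∧ D y w ∧ add u x = add x y ∧ add y w = add x y
  assoc_iff : ∀ x y z, (D x y ∧ D (add x y) z) ↔ (D y z ∧ D x (add y z))
  assoc : ∀ x y z, D x y → D (add x y) z → add (add x y) z = add x (add y z)
  lcompl_def : ∀ x, D (lcompl x) x
  lcompl_add : ∀ x, add (lcompl x) x = one
  lcompl_unique : ∀ x u, D u x → add u x = one → u = lcompl x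
  rcompl_def : ∀ x, D x (rcompl x)
  rcompl_add : ∀ x, add x (rcompl x) = one
  rcompl_unique : ∀ x w, D x w → add x w = one → w = rcompl x
  one_add : ∀ x, D one x → x = zero
  add_one : ∀ x, D x one → x = zero

/-- The induced order of a pseudoeffect algebra. -/
def PseudoEffectAlgebra.le {P : Type*} (A : PseudoEffectAlgebra P) (x y : P) : Prop :=
  ∃ z, A.D x z ∧ A.add x z = y
/-- A good lattice pseudoeffect algebra: a pseudoeffect algebra whose induced
order coincides with a given bounded lattice order, satisfying the goodness
condition. -/
structure GoodLatticePseudoEffectAlgebra (P : Type*) [Lattice P] [BoundedOrder P]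
    extends PseudoEffectAlgebra P where
  le_iff : ∀ x y, (∃ z, D x z ∧ add x z = y) ↔ x ≤ y
  zero_eq : zero = ⊥
  one_eq : one = ⊤
  good : ∀ x y, rcompl x ≤ y →
    rcompl (add (lcompl x) (lcompl y)) = lcompl (add (rcompl x) (rcompl y))
/-- A (possibly non-commutative) quasiresiduated lattice: bounded lattice with
partial `odot` (defined iff `x̃ ≤ y`, where `x̄ = imp x ⊥`, `x̃ = limp x ⊥`)
forming a partial monoid with unit `⊤`, full `imp` (→) and `limp` (⇝),
satisfying (Q2)-(Q5). -/
structure QRL (Q : Type*) [Lattice Q] [BoundedOrder Q] where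
  odot : Q → Q → Q
  imp : Q → Q → Q
  limp : Q → Q → Q
  odot_top : ∀ x, odot x ⊤ = x
  top_odot : ∀ x, odot ⊤ x = x
  assoc_iff : ∀ x y z,
    (limp x ⊥ ≤ y ∧ limp (odot x y) ⊥ ≤ z) ↔ (limp y ⊥ ≤ z ∧ limp x ⊥ ≤ odot y z)
  assoc : ∀ x y z, limp x ⊥ ≤ y → limp (odot x y) ⊥ ≤ z →
    odot (odot x y) z = odot x (odot y z)
  invol₁ : ∀ x, limp (imp x ⊥) ⊥ = x
  invol₂ : ∀ x, imp (limp x ⊥) ⊥ = x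
  anti₁ : ∀ x y, x ≤ y → imp y ⊥ ≤ imp x ⊥
  anti₂ : ∀ x y, x ≤ y → limp y ⊥ ≤ limp x ⊥
  quasiadj₁ : ∀ x y z,
    odot (x ⊔ imp y ⊥) y ≤ y ⊓ z ↔ x ⊔ imp y ⊥ ≤ imp y z
  quasiadj₂ : ∀ x y z,
    odot y (x ⊔ limp y ⊥) ≤ y ⊓ z ↔ x ⊔ limp y ⊥ ≤ limp y z
  good : ∀ x y, x ≤ imp y ⊥ →
    limp (odot (imp x ⊥) (imp y ⊥)) ⊥ = imp (odot (limp x ⊥) (limp y ⊥)) ⊥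

section QRLHelpers

variable {C : Type*} [Lattice C] [BoundedOrder C] (Q : QRL C)

private lemma bot_prod' (y : C) : Q.odot (Q.imp y ⊥) y = ⊥ := by
  have h := Q.quasiadj₁ ⊥ y ⊥
  rw [bot_sup_eq] at h
  have h2 := h.mpr le_rfl
  exact le_bot_iff.mp (h2.trans inf_le_right)

private lemma prod_bot' (y : C) : Q.odot y (Q.limp y ⊥) = ⊥ := by
  have h := Q.quasiadj₂ ⊥ y ⊥
  rw [bot_sup_eq] at h
  have h2 := h.mpr le_rfl
  exact le_bot_iff.mp (h2.trans inf_le_right)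

private lemma imp_top' (y : C) : Q.imp y ⊤ = ⊤ := by
  have h := Q.quasiadj₁ ⊤ y ⊤
  rw [top_sup_eq, Q.top_odot] at h
  exact le_antisymm le_top (h.mp (le_inf le_rfl le_top))

private lemma limp_top' (y : C) : Q.limp y ⊤ = ⊤ := by
  have h := Q.quasiadj₂ ⊤ y ⊤
  rw [top_sup_eq, Q.odot_top] at h
  exact le_antisymm le_top (h.mp (le_inf le_rfl le_top))

private lemma prodle₁ {a y : C} (h : Q.imp y ⊥ ≤ a) : Q.odot a y ≤ y := by
  have h2 := Q.quasiadj₁ a y ⊤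
  rw [sup_eq_left.mpr h, imp_top'] at h2
  exact (h2.mpr le_top).trans inf_le_left

private lemma prodle₂ {b y : C} (h : Q.limp y ⊥ ≤ b) : Q.odot y b ≤ y := by
  have h2 := Q.quasiadj₂ b y ⊤
  rw [sup_eq_left.mpr h, limp_top'] at h2
  exact (h2.mpr le_top).trans inf_le_left

private lemma res₁ {a y : C} (h : Q.imp y ⊥ ≤ a) (z : C) :
    Q.odot a y ≤ z ↔ a ≤ Q.imp y z := by
  have h2 := Q.quasiadj₁ a y z
  rw [sup_eq_left.mpr h] at h2
  exact ⟨fun hz => h2.mp (le_inf (prodle₁ Q h) hz), fun hz => (h2.mpr hz).trans inf_le_right⟩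

private lemma res₂ {b y : C} (h : Q.limp y ⊥ ≤ b) (z : C) :
    Q.odot y b ≤ z ↔ b ≤ Q.limp y z := by
  have h2 := Q.quasiadj₂ b y z
  rw [sup_eq_left.mpr h] at h2
  exact ⟨fun hz => h2.mp (le_inf (prodle₂ Q h) hz), fun hz => (h2.mpr hz).trans inf_le_right⟩

private lemma bar_top' : Q.imp (⊤ : C) ⊥ = ⊥ := by
  have h := (res₁ Q (le_refl (Q.imp (⊤ : C) ⊥)) ⊥).mpr le_rfl
  rwa [Q.odot_top, le_bot_iff] at h

private lemma til_top' : Q.limp (⊤ : C) ⊥ = ⊥ := by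
  have h := (res₂ Q (le_refl (Q.limp (⊤ : C) ⊥)) ⊥).mpr le_rfl
  rwa [Q.top_odot, le_bot_iff] at h

private lemma til_bot' : Q.limp (⊥ : C) ⊥ = ⊤ := by
  have h := Q.invol₁ (⊤ : C)
  rwa [bar_top'] at h

private lemma cancel_r {a b : C} (h : Q.limp a ⊥ ≤ b) :
    Q.odot b (Q.limp (Q.odot a b) ⊥) = Q.limp a ⊥ := by
  obtain ⟨h1, h2⟩ := (Q.assoc_iff a b (Q.limp (Q.odot a b) ⊥)).mp ⟨h, le_rfl⟩
  have heq := Q.assoc a b (Q.limp (Q.odot a b) ⊥) h le_rfl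
  rw [prod_bot'] at heq
  exact le_antisymm ((res₂ Q h2 ⊥).mp (le_of_eq heq.symm)) h2

private lemma cancel_l {a b : C} (h : Q.limp a ⊥ ≤ b) :
    Q.odot (Q.imp (Q.odot a b) ⊥) a = Q.imp b ⊥ := by
  have hd : Q.limp (Q.imp (Q.odot a b) ⊥) ⊥ ≤ Q.odot a b := le_of_eq (Q.invol₁ _)
  obtain ⟨h1, h2⟩ := (Q.assoc_iff (Q.imp (Q.odot a b) ⊥) a b).mpr ⟨h, hd⟩
  have heq := Q.assoc (Q.imp (Q.odot a b) ⊥) a b h1 h2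
  rw [bot_prod'] at heq
  have hb := (res₂ Q h2 ⊥).mp (le_of_eq heq)
  have hv : Q.limp (Q.odot (Q.imp (Q.odot a b) ⊥) a) ⊥ = b := le_antisymm h2 hb
  have hv2 := congrArg (fun w => Q.imp w ⊥) hv
  simpa [Q.invol₂] using hv2

end QRLHelpers

/-- Every quasiresiduated lattice can be converted into a good lattice
pseudoeffect algebra via `x + y := (x̄ ⊙ ȳ)~` (defined iff `x ≤ ȳ`), whose
induced order coincides with the lattice order. -/


theorem qrl_to_glpea {C : Type*} [Lattice C] [BoundedOrder C] (Q : QRL C) :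
    ∃ A : GoodLatticePseudoEffectAlgebra C,
      (∀ x y, A.D x y ↔ x ≤ Q.imp y ⊥) ∧
      (∀ x y, A.D x y →
        A.add x y = Q.limp (Q.odot (Q.imp x ⊥) (Q.imp y ⊥)) ⊥) ∧
      (∀ x, A.lcompl x = Q.imp x ⊥) ∧
      (∀ x, A.rcompl x = Q.limp x ⊥) := by
  refine ⟨{
    D := fun x y => x ≤ Q.imp y ⊥
    add := fun x y => Q.limp (Q.odot (Q.imp x ⊥) (Q.imp y ⊥)) ⊥
    lcompl := fun x => Q.imp x ⊥
    rcompl := fun x => Q.limp x ⊥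
    zero := ⊥
    one := ⊤
    P1 := ?_
    assoc_iff := ?_
    assoc := ?_
    lcompl_def := fun x => le_rfl
    lcompl_add := ?_
    lcompl_unique := ?_
    rcompl_def := fun x => le_of_eq (Q.invol₂ x).symm
    rcompl_add := ?_
    rcompl_unique := ?_
    one_add := ?_
    add_one := ?_
    le_iff := ?_
    zero_eq := rfl
    one_eq := rfl
    good := ?_ },
    fun x y => Iff.rfl, fun x y _ => rfl, fun x => rfl, fun x => rfl⟩
  -- P1
  · intro x y hD
    have hdx : Q.limp (Q.imp x ⊥) ⊥ ≤ Q.imp y ⊥ := by rw [Q.invol₁]; exact hD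
    have hq_lx : Q.odot (Q.imp x ⊥) (Q.imp y ⊥) ≤ Q.imp x ⊥ := prodle₂ Q hdx
    have hq_ly : Q.odot (Q.imp x ⊥) (Q.imp y ⊥) ≤ Q.imp y ⊥ :=
      prodle₁ Q (Q.anti₁ _ _ hD)
    have hxs : x ≤ Q.limp (Q.odot (Q.imp x ⊥) (Q.imp y ⊥)) ⊥ := by
      have h := Q.anti₂ _ _ hq_lx; rwa [Q.invol₁] at h
    refine ⟨Q.odot (Q.imp x ⊥) (Q.limp (Q.odot (Q.imp x ⊥) (Q.imp y ⊥)) ⊥),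
      Q.limp (Q.limp (Q.odot
        (Q.imp (Q.odot (Q.imp x ⊥) (Q.imp y ⊥)) ⊥) (Q.imp y ⊥)) ⊥) ⊥,
      ?_, ?_, ?_, ?_⟩
    · -- D u x
      exact prodle₂ Q (by rw [Q.invol₁]; exact hxs)
    · -- D y w
      show y ≤ Q.imp (Q.limp (Q.limp (Q.odot
        (Q.imp (Q.odot (Q.imp x ⊥) (Q.imp y ⊥)) ⊥) (Q.imp y ⊥)) ⊥) ⊥) ⊥
      rw [Q.invol₂]
      have hple : Q.odot (Q.imp (Q.odot (Q.imp x ⊥) (Q.imp y ⊥)) ⊥) (Q.imp y ⊥)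
          ≤ Q.imp y ⊥ := prodle₁ Q (Q.anti₁ _ _ hq_ly)
      have h := Q.anti₂ _ _ hple
      rwa [Q.invol₁] at h
    · -- add u x = add x y
      show Q.limp (Q.odot (Q.imp
          (Q.odot (Q.imp x ⊥) (Q.limp (Q.odot (Q.imp x ⊥) (Q.imp y ⊥)) ⊥)) ⊥)
          (Q.imp x ⊥)) ⊥
        = Q.limp (Q.odot (Q.imp x ⊥) (Q.imp y ⊥)) ⊥
      have hc1 := cancel_l Q (show Q.limp (Q.imp x ⊥) ⊥ ≤
          Q.limp (Q.odot (Q.imp x ⊥) (Q.imp y ⊥)) ⊥ by rw [Q.invol₁]; exact hxs)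
      rw [hc1, Q.invol₁]
    · -- add y w = add x y
      show Q.limp (Q.odot (Q.imp y ⊥) (Q.imp (Q.limp (Q.limp (Q.odot
          (Q.imp (Q.odot (Q.imp x ⊥) (Q.imp y ⊥)) ⊥) (Q.imp y ⊥)) ⊥) ⊥) ⊥)) ⊥
        = Q.limp (Q.odot (Q.imp x ⊥) (Q.imp y ⊥)) ⊥
      rw [Q.invol₂]
      have hc2 := cancel_r Q (show Q.limp (Q.imp (Q.odot (Q.imp x ⊥) (Q.imp y ⊥)) ⊥) ⊥
          ≤ Q.imp y ⊥ by rw [Q.invol₁]; exact hq_ly)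
      rw [hc2, Q.invol₁]
  -- assoc_iff
  · intro x y z
    have h := Q.assoc_iff (Q.imp x ⊥) (Q.imp y ⊥) (Q.imp z ⊥)
    rw [Q.invol₁, Q.invol₁] at h
    simpa [Q.invol₂] using h
  -- assoc
  · intro x y z hxy hs
    rw [Q.invol₂, Q.invol₂]
    congr 1
    exact Q.assoc _ _ _ (by rw [Q.invol₁]; exact hxy) hs
  -- lcompl_add
  · intro x
    show Q.limp (Q.odot (Q.imp (Q.imp x ⊥) ⊥) (Q.imp x ⊥)) ⊥ = ⊤
    rw [bot_prod' Q (Q.imp x ⊥), til_bot']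
  -- lcompl_unique
  · intro x u hD hadd
    have hq : Q.odot (Q.imp u ⊥) (Q.imp x ⊥) = ⊥ := by
      have h := congrArg (fun w => Q.imp w ⊥) hadd
      simpa [Q.invol₂, bar_top'] using h
    have h1 : Q.imp (Q.imp x ⊥) ⊥ ≤ Q.imp u ⊥ := Q.anti₁ _ _ hD
    have h2 := (res₁ Q h1 ⊥).mp (le_of_eq hq)
    have h3 : Q.imp u ⊥ = Q.imp (Q.imp x ⊥) ⊥ := le_antisymm h2 h1
    have h4 := congrArg (fun w => Q.limp w ⊥) h3
    simpa [Q.invol₁] using h4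
  -- rcompl_add
  · intro x
    show Q.limp (Q.odot (Q.imp x ⊥) (Q.imp (Q.limp x ⊥) ⊥)) ⊥ = ⊤
    rw [Q.invol₂, bot_prod' Q x, til_bot']
  -- rcompl_unique
  · intro x w hD hadd
    have hq : Q.odot (Q.imp x ⊥) (Q.imp w ⊥) = ⊥ := by
      have h := congrArg (fun v => Q.imp v ⊥) hadd
      simpa [Q.invol₂, bar_top'] using h
    have h1 : Q.limp (Q.imp x ⊥) ⊥ ≤ Q.imp w ⊥ := by rw [Q.invol₁]; exact hD
    have h2 := (res₂ Q h1 ⊥).mp (le_of_eq hq)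
    rw [Q.invol₁] at h2
    have h3 : Q.imp w ⊥ = x := le_antisymm h2 hD
    have h4 := congrArg (fun v => Q.limp v ⊥) h3
    simpa [Q.invol₁] using h4
  -- one_add
  · intro x h
    have h1 : Q.imp x ⊥ = ⊤ := le_antisymm le_top h
    have h2 := Q.invol₁ x
    rw [h1, til_top'] at h2
    exact h2.symm
  -- add_one
  · intro x h
    rw [bar_top'] at h
    exact le_bot_iff.mp h
  -- le_iff
  · intro x y
    constructor
    · rintro ⟨z, hD, hadd⟩
      have h1 : Q.odot (Q.imp x ⊥) (Q.imp z ⊥) ≤ Q.imp x ⊥ :=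
        prodle₂ Q (by rw [Q.invol₁]; exact hD)
      have h2 := Q.anti₂ _ _ h1
      rwa [Q.invol₁, hadd] at h2
    · intro hxy
      have hvu : Q.limp (Q.imp (Q.imp y ⊥) ⊥) ⊥ ≤ Q.imp x ⊥ := by
        rw [Q.invol₁]; exact Q.anti₁ _ _ hxy
      have hc := cancel_r Q hvu
      refine ⟨Q.limp (Q.limp (Q.odot (Q.imp (Q.imp y ⊥) ⊥) (Q.imp x ⊥)) ⊥) ⊥, ?_, ?_⟩
      · show x ≤ Q.imp (Q.limp (Q.limp (Q.odot
            (Q.imp (Q.imp y ⊥) ⊥) (Q.imp x ⊥)) ⊥) ⊥) ⊥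
        rw [Q.invol₂]
        have hple : Q.odot (Q.imp (Q.imp y ⊥) ⊥) (Q.imp x ⊥) ≤ Q.imp x ⊥ :=
          prodle₁ Q (Q.anti₁ _ _ (Q.anti₁ _ _ hxy))
        have h := Q.anti₂ _ _ hple
        rwa [Q.invol₁] at h
      · show Q.limp (Q.odot (Q.imp x ⊥) (Q.imp (Q.limp (Q.limp (Q.odot
            (Q.imp (Q.imp y ⊥) ⊥) (Q.imp x ⊥)) ⊥) ⊥) ⊥)) ⊥ = y
        rw [Q.invol₂, hc]
        simp only [Q.invol₁]
  -- good
  · intro x y h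
    have hb : Q.imp x ⊥ ≤ Q.imp (Q.imp y ⊥) ⊥ := by
      have h1 : Q.imp y ⊥ ≤ x := by
        have h2 := Q.anti₁ _ _ h
        rwa [Q.invol₂] at h2
      exact Q.anti₁ _ _ h1
    have hg := Q.good (Q.imp x ⊥) (Q.imp y ⊥) hb
    rw [Q.invol₁, Q.invol₁] at hg
    rw [hg]
    simp only [Q.invol₁, Q.invol₂]
end
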